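/- arXiv:1409.0799 — 2 statements merged into one kernel-verified Lean document; each statement's English description precedes it below -/
import Mathlib

section
/- Let K be an algebraically closed field of characteristic 0, let R = K[T1,T2,T4,T6,T7,T8], and let g4, g6 ∈ K[T3,T4,T5] be homogeneous of degrees 4 and 6 respectively. Then the polynomial g := T1^2 + T2^3 + T2·g4(T4 - T7T8 + T6T8, T4, T4 - T7T8) + g6(T4 - T7T8 + T6T8, T4, T4 - T7T8) is irreducible in R. -/
/-!
Viewed as a polynomial in `T1` over the remaining variables, `g = T1^2 + c` with `c` free of `T1`,
so `g` can only factor if `-c` is a square. Sending `T2 ↦ t` and every other variable to `0`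
kills both substituted terms, since `g4` and `g6` are homogeneous of positive degree, and turns
`-c` into `-t^3`, which has odd degree and so is no square in `K[t]`.
-/

open MvPolynomial

namespace Polynomial

variable {A : Type*} [CommRing A] [IsDomain A]

theorem irreducible_X_sq_add_C {c : A} (hc : ∀ r : A, r ^ 2 ≠ -c) :
    Irreducible (X ^ 2 + C c : A[X]) := by
  have hmonic : (X ^ 2 + C c : A[X]).Monic := monic_X_pow_add_C c two_ne_zero
  have hdeg : (X ^ 2 + C c : A[X]).natDegree = 2 := natDegree_X_pow_add_C
  rw [hmonic.irreducible_iff_roots_eq_zero_of_degree_le_three hdeg.ge (by omega)]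
  refine Multiset.eq_zero_of_forall_notMem fun r hr => hc r ?_
  have hroot := (mem_roots hmonic.ne_zero).1 hr
  simp only [IsRoot, eval_add, eval_pow, eval_X, eval_C] at hroot
  linear_combination hroot

theorem sq_ne_neg_X_pow_three (q : A[X]) : q ^ 2 ≠ -X ^ 3 := by
  intro h
  have hdeg := congrArg natDegree h
  rw [natDegree_pow, natDegree_neg, natDegree_X_pow] at hdeg
  omega

end Polynomial

namespace MvPolynomial

theorem finSuccEquiv_rename_succ {R : Type*} [CommSemiring R] {n : ℕ}
    (p : MvPolynomial (Fin n) R) :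
    finSuccEquiv R n (rename Fin.succ p) = Polynomial.C p := by
  induction p using MvPolynomial.induction_on with
  | C a => simp [finSuccEquiv_apply]
  | add p q hp hq => simp [hp, hq]
  | mul_X p i hp => simp [hp, finSuccEquiv_X_succ]

theorem irreducible_X_zero_sq_add_rename_succ {R : Type*} [CommRing R] [IsDomain R] {n : ℕ}
    {c : MvPolynomial (Fin n) R} (hc : ∀ r, r ^ 2 ≠ -c) :
    Irreducible (X 0 ^ 2 + rename Fin.succ c : MvPolynomial (Fin (n + 1)) R) := by
  rw [← MulEquiv.irreducible_iff (finSuccEquiv R n)]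
  simpa [finSuccEquiv_X_zero, finSuccEquiv_rename_succ] using
    Polynomial.irreducible_X_sq_add_C hc

theorem IsHomogeneous.constantCoeff_eq_zero {σ R : Type*} [CommSemiring R]
    {p : MvPolynomial σ R} {n : ℕ} (hp : p.IsHomogeneous n) (hn : n ≠ 0) :
    constantCoeff p = 0 := by
  rw [constantCoeff_eq, hp.coeff_eq_zero (by simpa using hn.symm)]

end MvPolynomial

/-- Variables: `X 0 = T1`, `X 1 = T2`, `X 2 = T4`, `X 3 = T6`, `X 4 = T7`, `X 5 = T8`. -/
theorem stmt_0_general {K : Type*} [Field K]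
    (g4 g6 : MvPolynomial (Fin 3) K)
    (hg4 : g4.IsHomogeneous 4) (hg6 : g6.IsHomogeneous 6) :
    Irreducible
      ((X 0 : MvPolynomial (Fin 6) K) ^ 2 + X 1 ^ 3
        + X 1 * aeval ![X 2 - X 4 * X 5 + X 3 * X 5, X 2, X 2 - X 4 * X 5] g4
        + aeval ![X 2 - X 4 * X 5 + X 3 * X 5, X 2, X 2 - X 4 * X 5] g6) := by
  set w : Fin 3 → MvPolynomial (Fin 5) K := ![X 1 - X 3 * X 4 + X 2 * X 4, X 1, X 1 - X 3 * X 4]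
  have hv : ![X 2 - X 4 * X 5 + X 3 * X 5, X 2, X 2 - X 4 * X 5] =
      fun i => rename (Fin.succ : Fin 5 → Fin 6) (w i) := by
    funext i; fin_cases i <;> simp [w]
  set ψ : MvPolynomial (Fin 5) K →ₐ[K] Polynomial K := aeval (Pi.single 0 Polynomial.X)
  have hψw : (fun i => ψ (w i)) = 0 := by
    funext i; fin_cases i <;> simp [w, ψ]
  have hψ : ∀ {g : MvPolynomial (Fin 3) K} {m : ℕ}, g.IsHomogeneous m → m ≠ 0 →
      ψ (aeval w g) = 0 := by
    intro g m hg hm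
    rw [comp_aeval_apply, hψw, aeval_zero, hg.constantCoeff_eq_zero hm, map_zero]
  rw [hv, ← comp_aeval_apply, ← comp_aeval_apply]
  convert irreducible_X_zero_sq_add_rename_succ
    (c := X 0 ^ 3 + X 0 * aeval w g4 + aeval w g6) fun r hr => ?_ using 1
  · simp only [map_add, map_mul, map_pow, rename_X, Fin.succ_zero_eq_one]; ring
  · apply Polynomial.sq_ne_neg_X_pow_three (ψ r)
    have hψr := congrArg ψ hr
    rw [map_pow, map_neg, map_add, map_add, map_mul, map_pow, hψ hg4 (by norm_num),
      hψ hg6 (by norm_num)] at hψr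
    simpa [ψ] using hψr

/-- With K algebraically closed of characteristic 0 and g4, g6 homogeneous of
degrees 4 and 6 in three variables, the polynomial
g = T1^2 + T2^3 + T2·g4(T4-T7T8+T6T8, T4, T4-T7T8) + g6(T4-T7T8+T6T8, T4, T4-T7T8)
is irreducible in K[T1,T2,T4,T6,T7,T8].  Variables: X 0 = T1, X 1 = T2, X 2 = T4,
X 3 = T6, X 4 = T7, X 5 = T8. -/
theorem stmt_0 {K : Type*} [Field K] [IsAlgClosed K] [CharZero K]
    (g4 g6 : MvPolynomial (Fin 3) K)
    (hg4 : g4.IsHomogeneous 4) (hg6 : g6.IsHomogeneous 6) :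
    Irreducible
      ((X 0 : MvPolynomial (Fin 6) K) ^ 2 + X 1 ^ 3
        + X 1 * aeval ![X 2 - X 4 * X 5 + X 3 * X 5, X 2, X 2 - X 4 * X 5] g4
        + aeval ![X 2 - X 4 * X 5 + X 3 * X 5, X 2, X 2 - X 4 * X 5] g6) :=
  stmt_0_general g4 g6 hg4 hg6
end

section
/- Let K be an algebraically closed field of characteristic 0 and let f ∈ K[T1,T2,T3] be homogeneous of degree 3 with V(f, T4) ⊆ P^3 smooth. Then the ideal ⟨T4 − T5T7, f − T6T7⟩ ⊆ K[T1,…,T7] is prime, and after substituting T4 = T5T7 the ring K[T1,T2,T3,T5,T6,T7]/⟨f − T6T7⟩ is an integral domain. -/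
/-!
Substituting `T₄ = T₅T₇` identifies `K[T₁,…,T₇]/⟨T₄ − T₅T₇⟩` with `K[T₁,T₂,T₃,T₅,T₆,T₇]`, so both
claims reduce to the primality of `f − T₆T₇`. As a polynomial in `T₇` over `K[T₁,T₂,T₃,T₅,T₆]`
this is `−T₆·T₇ + f`, of degree one with coprime coefficients, since the prime `T₆` cannot divide
the nonzero `f`, which does not involve it. By Gauss's lemma it is irreducible, hence prime.
-/

open MvPolynomial

theorem Ideal.isPrime_span_pair_of_ker_eq {A B : Type*} [CommRing A] [CommRing B] {φ : A →+* B}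
    (hφ : Function.Surjective φ) {x y : A} (hker : RingHom.ker φ = Ideal.span {x})
    (hy : (Ideal.span {φ y}).IsPrime) : (Ideal.span {x, y}).IsPrime := by
  have hspan : Ideal.span {x, y} = (Ideal.span {φ y}).comap φ := by
    rw [← Set.image_singleton, ← Ideal.map_span, Ideal.comap_map_of_surjective φ hφ,
      ← RingHom.ker_eq_comap_bot, hker, Ideal.span_insert, sup_comm]
  exact hspan ▸ hy.comap φ

namespace MvPolynomial

variable {R : Type*}

section Substitution

variable [CommRing R] {n : ℕ} (p : Fin (n + 1)) (g : MvPolynomial (Fin n) R)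

theorem bind₁_insertNth_rename_succAbove (w : MvPolynomial (Fin n) R) :
    bind₁ (Fin.insertNth p g X) (rename p.succAbove w) = w := by
  rw [bind₁_rename, Fin.insertNth_comp_succAbove, bind₁_X_left, AlgHom.id_apply]

theorem bind₁_insertNth_surjective :
    Function.Surjective (bind₁ (Fin.insertNth p g X) : MvPolynomial (Fin (n + 1)) R →ₐ[R] _) :=
  fun w => ⟨rename p.succAbove w, bind₁_insertNth_rename_succAbove p g w⟩

theorem ker_bind₁_insertNth :
    RingHom.ker (bind₁ (Fin.insertNth p g X) : MvPolynomial (Fin (n + 1)) R →ₐ[R] _) =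
      Ideal.span {X p - rename p.succAbove g} := by
  set I := Ideal.span {X p - rename p.succAbove g}
  refine le_antisymm (fun w hw => ?_) ?_
  · -- modulo `I`, substituting `g` for `X p` and renaming back is the identity
    have hsection : (Ideal.Quotient.mkₐ R I).comp
        ((rename p.succAbove).comp (bind₁ (Fin.insertNth p g X))) = Ideal.Quotient.mkₐ R I := by
      refine algHom_ext fun j => Fin.succAboveCases p ?_ (fun k => ?_) j
      · simpa [Ideal.Quotient.mkₐ_eq_mk] using
          (Ideal.Quotient.eq.mpr (Ideal.mem_span_singleton_self _)).symm
      · simp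
    rw [← Ideal.Quotient.eq_zero_iff_mem, ← Ideal.Quotient.mkₐ_eq_mk R, ← hsection]
    simp [(RingHom.mem_ker).mp hw]
  · rw [Ideal.span_le, Set.singleton_subset_iff, SetLike.mem_coe, RingHom.mem_ker]
    simp [bind₁_insertNth_rename_succAbove]

end Substitution

theorem rename_eq_zero_of_X_dvd [CommRing R] {σ τ : Type*} {g : τ → σ} {i : σ}
    (hi : i ∉ Set.range g) {q : MvPolynomial τ R} (h : X i ∣ rename g q) : rename g q = 0 := by
  classical
  let φ : MvPolynomial σ R →ₐ[R] MvPolynomial σ R := aeval (Function.update X i 0)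
  have hfix : φ (rename g q) = rename g q := by
    rw [aeval_rename, Function.update_comp_eq_of_notMem_range _ _ hi, rename_eq_aeval]
  have := map_dvd φ h
  rwa [aeval_X, Function.update_self, hfix, zero_dvd_iff] at this

theorem optionEquivLeft_rename_some [CommRing R] {σ : Type*} (a : MvPolynomial σ R) :
    optionEquivLeft R σ (rename some a) = Polynomial.C a := by
  rw [← AlgEquiv.eq_symm_apply]
  simp [optionEquivLeft_symm_apply]

theorem prime_rename_some_sub_X_mul_X_none [CommRing R] [IsDomain R]
    [UniqueFactorizationMonoid R] {σ : Type*} {a : MvPolynomial σ R} {j : σ} (ha : ¬ X j ∣ a) :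
    Prime (rename some a - X (some j) * X none) := by
  have himage : optionEquivLeft R σ (rename some a - X (some j) * X none) =
      Polynomial.C (-X j) * Polynomial.X + Polynomial.C a := by
    simp [optionEquivLeft_rename_some]
    ring
  rw [← MulEquiv.prime_iff (optionEquivLeft R σ), himage]
  exact UniqueFactorizationMonoid.irreducible_iff_prime.mp <|
    Polynomial.irreducible_C_mul_X_add_C (neg_ne_zero.mpr (X_ne_zero j))
      (X_prime.irreducible.isRelPrime_iff_not_dvd.mpr ha).neg_left

end MvPolynomial

theorem prime_rename_castLE_sub_X_mul_X {R : Type*} [CommRing R] [IsDomain R]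
    [UniqueFactorizationMonoid R] {f : MvPolynomial (Fin 3) R} (hf : f ≠ 0) :
    Prime (rename (Fin.castLE (by norm_num : (3:ℕ) ≤ 6)) f - X 4 * X 5 :
      MvPolynomial (Fin 6) R) := by
  set a : MvPolynomial (Fin 5) R := rename (Fin.castLE (by norm_num : (3:ℕ) ≤ 5)) f
  have ha : ¬ X 4 ∣ a := fun h => hf <| rename_injective _ (Fin.castLE_injective _) <|
    (rename_eq_zero_of_X_dvd (by rintro ⟨k, hk⟩; fin_cases k <;> simp at hk) h).trans
      (map_zero _).symm
  have hrelabel : finSuccEquivLast ∘ Fin.castLE (by norm_num : (3:ℕ) ≤ 6) =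
      some ∘ Fin.castLE (by norm_num : (3:ℕ) ≤ 5) := by
    funext i; fin_cases i <;> rfl
  rw [← MulEquiv.prime_iff (renameEquiv R finSuccEquivLast)]
  convert prime_rename_some_sub_X_mul_X_none ha using 1
  simp only [renameEquiv_apply, map_sub, map_mul, rename_X, rename_rename, hrelabel, a]
  rfl

/-- Let f ∈ K[T1,T2,T3] be homogeneous of degree 3 with V(f,T4) ⊆ P^3
smooth (equivalently, the plane cubic V(f) ⊆ P^2 is smooth, encoded via the Jacobian
criterion).  Then ⟨T4 − T5T7, f − T6T7⟩ ⊆ K[T1,…,T7] is prime, and after substituting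
T4 = T5T7 the ring K[T1,T2,T3,T5,T6,T7]/⟨f − T6T7⟩ is an integral domain.
In the conclusion's first ideal the variables are X i = T(i+1) in Fin 7; in the second
quotient ring the six variables are indexed 0 = T1, 1 = T2, 2 = T3, 3 = T5, 4 = T6,
5 = T7. -/
theorem stmt_16 {K : Type*} [Field K]
    (f : MvPolynomial (Fin 3) K)
    (hsm : ∀ y : Fin 3 → K, y ≠ 0 → eval y f = 0 → ∃ i, eval y (pderiv i f) ≠ 0) :
    (Ideal.span
      ({X 3 - X 4 * X 6,
        rename (Fin.castLE (by norm_num : (3:ℕ) ≤ 7)) f - X 5 * X 6} :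
        Set (MvPolynomial (Fin 7) K))).IsPrime
    ∧ IsDomain (MvPolynomial (Fin 6) K ⧸ Ideal.span
        ({rename (Fin.castLE (by norm_num : (3:ℕ) ≤ 6)) f - X 4 * X 5} :
          Set (MvPolynomial (Fin 6) K))) := by
  have hf : f ≠ 0 := by
    rintro rfl
    simpa using hsm 1 one_ne_zero (map_zero _)
  have hprime := prime_rename_castLE_sub_X_mul_X hf
  have hspan := (Ideal.span_singleton_prime hprime.ne_zero).mpr hprime
  refine ⟨?_, Ideal.Quotient.isDomain _⟩
  let g : MvPolynomial (Fin 6) K := X 3 * X 5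
  have hsubst : bind₁ (Fin.insertNth 3 g X)
      (rename (Fin.castLE (by norm_num : (3:ℕ) ≤ 7)) f - X 5 * X 6) =
      rename (Fin.castLE (by norm_num : (3:ℕ) ≤ 6)) f - X 4 * X 5 := by
    have hcomp : Fin.insertNth 3 g X ∘ Fin.castLE (by norm_num : (3:ℕ) ≤ 7) =
        X ∘ Fin.castLE (by norm_num : (3:ℕ) ≤ 6) := by
      funext i; fin_cases i <;> rfl
    rw [map_sub, map_mul, bind₁_X_right, bind₁_X_right, bind₁_rename, hcomp, rename_eq_aeval]
    rfl
  have hker := ker_bind₁_insertNth 3 g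
  rw [show rename (Fin.succAbove 3) g = X 4 * X 6 by simp [g]; rfl] at hker
  exact Ideal.isPrime_span_pair_of_ker_eq (bind₁_insertNth_surjective 3 g) hker (hsubst ▸ hspan)
end
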